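/- As y → 0+, the function √(P(y)) satisfies √(P(y)) = √3/(2y) + O(y) ; in particular y·√(P(y)) → √3/2 as y → 0+. -/
import Mathlib
set_option maxHeartbeats 1000000

open Real Filter

noncomputable def P (y : ℝ) : ℝ :=
  (Real.exp (4*y) + 10 * Real.exp (2*y) + 1) / (4 * (Real.exp (2*y) - 1)^2)

lemma exp_approx {y : ℝ} (hy : 0 ≤ y) (hy2 : y ≤ 1/2) :
    |Real.exp (2*y) - (1 + 2*y + 2*y^2 + (4/3)*y^3)| ≤ y^4 := by
  have hx : |2*y| ≤ 1 := by rw [abs_of_nonneg (by linarith)]; linarith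
  have h := Real.exp_bound hx (n := 4) (by norm_num)
  have hs : ∑ m ∈ Finset.range 4, (2*y) ^ m / m.factorial
      = 1 + 2*y + 2*y^2 + (4/3)*y^3 := by
    simp [Finset.sum_range_succ, Nat.factorial]
    ring
  have habs : |2*y| = 2*y := abs_of_nonneg (by linarith)
  rw [hs, habs] at h
  refine h.trans ?_
  have h4 : (0:ℝ) ≤ y^4 := by positivity
  norm_num [Nat.factorial]
  nlinarith

lemma sqrt3_ge : (17:ℝ)/10 ≤ Real.sqrt 3 := by
  nlinarith [Real.sq_sqrt (show (0:ℝ) ≤ 3 by norm_num), Real.sqrt_nonneg 3]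

lemma key_bound {y : ℝ} (hy : 0 < y) (hy2 : y ≤ 1/2) :
    |y * Real.sqrt (P y) - Real.sqrt 3 / 2| ≤ 2 * y^2 := by
  have hexp := exp_approx hy.le hy2
  have hu1 : 2*y ≤ Real.exp (2*y) - 1 := by
    have := Real.add_one_le_exp (2*y); linarith
  have hP : P y = ((Real.exp (2*y))^2 + 10*(Real.exp (2*y)) + 1)
      / (4*(Real.exp (2*y) - 1)^2) := by
    unfold P
    rw [show (4:ℝ)*y = 2*y+2*y by ring, Real.exp_add]
    ring_nf
  set u := Real.exp (2*y) with hu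
  clear_value u
  have hupos : 0 < u - 1 := by linarith
  obtain ⟨e, hee⟩ : ∃ e, u = (1 + 2*y + 2*y^2 + (4/3)*y^3) + e :=
    ⟨u - (1 + 2*y + 2*y^2 + (4/3)*y^3), by ring⟩
  have heabs : |e| ≤ y^4 := by
    rw [hee] at hexp; simpa using hexp
  have he1 : -(y^4) ≤ e := neg_le_of_abs_le heabs
  have he2 : e ≤ y^4 := le_of_abs_le heabs
  -- power bounds
  have p2 : y^2 ≤ 1/4 := by nlinarith
  have p3 : y^3 ≤ 1/8 := by nlinarith
  have p4 : y^4 ≤ 1/16 := by nlinarith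
  have p5 : y^5 ≤ 1/32 := by nlinarith
  have q5 : y^5 ≤ y^4/2 := by nlinarith [pow_nonneg hy.le 4]
  have q6 : y^6 ≤ y^5/2 := by nlinarith [pow_nonneg hy.le 5]
  have q7 : y^7 ≤ y^6/2 := by nlinarith [pow_nonneg hy.le 6]
  have q8 : y^8 ≤ y^7/2 := by nlinarith [pow_nonneg hy.le 7]
  have hy4 : (0:ℝ) ≤ y^4 := by positivity
  -- decomposition of the numerator
  have hnum : y^2 * (u^2 + 10*u + 1) - 3 * (u - 1)^2
      = (8*y^5 + 4*y^6 + (16/3)*y^7 + (16/9)*y^8)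
        + e * (-12*y - 4*y^3 + 4*y^4 + (8/3)*y^5) + e^2 * (y^2 - 3) := by
    rw [hee]; ring
  have b1 : |8*y^5 + 4*y^6 + (16/3)*y^7 + (16/9)*y^8| ≤ 6*y^4 := by
    rw [abs_of_nonneg (by positivity)]
    nlinarith [pow_nonneg hy.le 5, pow_nonneg hy.le 6, pow_nonneg hy.le 7]
  have bg : |(-12*y - 4*y^3 + 4*y^4 + (8/3)*y^5)| ≤ 7 := by
    rw [abs_le]
    constructor <;> nlinarith [pow_nonneg hy.le 3, pow_nonneg hy.le 4, pow_nonneg hy.le 5]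
  have b2 : |e * (-12*y - 4*y^3 + 4*y^4 + (8/3)*y^5)| ≤ 7*y^4 := by
    rw [abs_mul]
    calc |e| * |(-12*y - 4*y^3 + 4*y^4 + (8/3)*y^5)| ≤ y^4 * 7 :=
          mul_le_mul heabs bg (abs_nonneg _) hy4
      _ = 7*y^4 := by ring
  have b3 : |e^2 * (y^2 - 3)| ≤ 3*y^4 := by
    rw [abs_mul, abs_pow]
    have he2' : |e|^2 ≤ y^4 := by nlinarith [abs_nonneg e]
    have : |y^2 - 3| ≤ 3 := by rw [abs_le]; constructor <;> nlinarith
    calc |e|^2 * |y^2-3| ≤ y^4 * 3 :=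
          mul_le_mul he2' this (abs_nonneg _) hy4
      _ = 3*y^4 := by ring
  have habs : |y^2 * (u^2 + 10*u + 1) - 3 * (u - 1)^2| ≤ 16 * y^4 := by
    rw [hnum]
    calc |_ + _ + _| ≤ _ := (abs_add_le _ _).trans (add_le_add (abs_add_le _ _) le_rfl)
      _ ≤ 6*y^4 + 7*y^4 + 3*y^4 := by
          exact add_le_add (add_le_add b1 b2) b3
      _ = 16 * y^4 := by ring
  -- bound on y^2 * P y - 3/4
  have hD : (0:ℝ) < 4 * (u-1)^2 := by positivity
  have hD16 : 16 * y^2 ≤ 4 * (u-1)^2 := by nlinarith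
  have hfrac : |y^2 * P y - 3/4| ≤ y^2 := by
    rw [hP]
    have hDne : (4 * (u-1)^2) ≠ 0 := ne_of_gt hD
    have heq : y^2 * ((u^2 + 10*u + 1) / (4 * (u - 1)^2)) - 3/4
        = (y^2 * (u^2 + 10*u + 1) - 3 * (u - 1)^2) / (4 * (u - 1)^2) := by
      field_simp
    rw [heq, abs_div, abs_of_pos hD, div_le_iff₀ hD]
    calc |y^2 * (u^2 + 10*u + 1) - 3 * (u - 1)^2| ≤ 16 * y^4 := habs
      _ = y^2 * (16 * y^2) := by ring
      _ ≤ y^2 * (4 * (u-1)^2) := by nlinarith [sq_nonneg y]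
  -- from squares to the values
  have hPpos : 0 ≤ P y := by
    rw [hP]
    apply div_nonneg _ (by positivity)
    nlinarith
  set A := y * Real.sqrt (P y) with hA
  have hAnn : 0 ≤ A := mul_nonneg hy.le (Real.sqrt_nonneg _)
  have hA2 : A^2 = y^2 * P y := by
    rw [hA, mul_pow, Real.sq_sqrt hPpos]
  have hs3 : (Real.sqrt 3 / 2)^2 = 3/4 := by
    rw [div_pow, Real.sq_sqrt (by norm_num : (0:ℝ) ≤ 3)]
    norm_num
  have hs3l : (17:ℝ)/20 ≤ Real.sqrt 3 / 2 := by
    linarith [sqrt3_ge]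
  have hmul : |A - Real.sqrt 3 / 2| * (A + Real.sqrt 3 / 2) = |A^2 - 3/4| := by
    rw [← abs_of_nonneg (by linarith : (0:ℝ) ≤ A + Real.sqrt 3 / 2), ← abs_mul]
    congr 1
    rw [← hs3]; ring
  have h1 : |A^2 - 3/4| ≤ y^2 := by rw [hA2]; exact hfrac
  have h2 : |A - Real.sqrt 3 / 2| * (17/20) ≤ y^2 := by
    calc |A - Real.sqrt 3 / 2| * (17/20)
        ≤ |A - Real.sqrt 3 / 2| * (A + Real.sqrt 3 / 2) :=
          mul_le_mul_of_nonneg_left (by linarith) (abs_nonneg _)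
      _ = |A^2 - 3/4| := hmul
      _ ≤ y^2 := h1
  have := abs_nonneg (A - Real.sqrt 3 / 2)
  linarith

lemma final_bound {y : ℝ} (hy : 0 < y) (hy2 : y ≤ 1/2) :
    |Real.sqrt (P y) - Real.sqrt 3 / (2*y)| ≤ 2 * y := by
  have h := key_bound hy hy2
  have heq : Real.sqrt (P y) - Real.sqrt 3 / (2*y)
      = (y * Real.sqrt (P y) - Real.sqrt 3 / 2) / y := by
    field_simp
  rw [heq, abs_div, abs_of_pos hy, div_le_iff₀ hy]
  calc |y * Real.sqrt (P y) - Real.sqrt 3 / 2| ≤ 2 * y^2 := h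
    _ = 2 * y * y := by ring

theorem stmt_1 :
    (∃ C : ℝ, ∀ᶠ y in nhdsWithin 0 (Set.Ioi 0),
      |Real.sqrt (P y) - Real.sqrt 3 / (2*y)| ≤ C * y) ∧
    Tendsto (fun y => y * Real.sqrt (P y)) (nhdsWithin 0 (Set.Ioi 0))
      (nhds (Real.sqrt 3 / 2)) := by
  have hmem : Set.Ioo (0:ℝ) (1/2) ∈ nhdsWithin (0:ℝ) (Set.Ioi 0) :=
    Ioo_mem_nhdsGT_of_mem (by norm_num : (0:ℝ) ∈ Set.Ico (0:ℝ) (1/2))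
  constructor
  · refine ⟨2, ?_⟩
    filter_upwards [hmem] with y hy
    exact final_bound hy.1 hy.2.le
  · rw [tendsto_iff_dist_tendsto_zero]
    apply squeeze_zero' (g := fun y => 2 * y^2)
    · filter_upwards with y using dist_nonneg
    · filter_upwards [hmem] with y hy
      rw [Real.dist_eq]
      exact key_bound hy.1 hy.2.le
    · have h0 : Tendsto (fun y : ℝ => 2 * y^2) (nhds 0) (nhds 0) := by
        have hc : Continuous fun y : ℝ => 2 * y^2 := by continuity
        simpa using hc.tendsto 0
      exact h0.mono_left nhdsWithin_le_nhds
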